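/- arXiv:math/0510592 — 4 statements merged into one kernel-verified Lean document; each statement's English description precedes it below -/
import Mathlib

section
/- Let N ≥ 1, 1 < p < ∞, and let f : ℝ^N → ℝ be convex and differentiable, satisfying α|ξ|^p ≤ f(ξ) ≤ β(|ξ|^p + 1) for all ξ ∈ ℝ^N and some constants α, β > 0 (so that the convex conjugate f* is real-valued). Let ξ, τ ∈ ℝ^N, set σ := ∇f(ξ), and assume that f* is differentiable at τ and at σ. Then f(ξ) + f*(τ) − τ·ξ ≤ (τ − σ)·(∇f*(τ) − ∇f*(σ)). -/
/-!
Since `σ = ∇f(ξ)` is a subgradient of the convex function `f` at `ξ`, the Fenchel–Young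
inequality is an equality there: `f*(σ) = σ·ξ - f(ξ)`. Hence `ζ ↦ f*(ζ) - ζ·ξ` is minimal at `σ`,
so `∇f*(σ) = ξ`, and the left-hand side equals `f*(τ) - f*(σ) - (τ - σ)·ξ`. The growth bound makes
`f*` a real-valued supremum of affine functions, hence convex, and the gradient inequality for
`f*` at `τ` bounds `f*(τ) - f*(σ)` by `(τ - σ)·∇f*(τ)`.
-/

open Set
open scoped RealInnerProductSpace

noncomputable section

theorem exists_mul_sub_mul_rpow_le {p α a : ℝ} (hp : 1 < p) (hα : 0 < α) (ha : 0 ≤ a) :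
    ∃ C, ∀ r : ℝ, 0 ≤ r → a * r - α * r ^ p ≤ C := by
  have hpq := Real.HolderConjugate.conjExponent hp
  set q := p.conjExponent
  -- Young's inequality for `(a / c) * (c * r)`, with `c` chosen so that `c ^ p / p = α`.
  set c := (α * p) ^ p⁻¹
  have hc : 0 < c := by positivity
  have hcp : c ^ p / p = α := by
    rw [Real.rpow_inv_rpow (by positivity) hpq.ne_zero]
    field_simp
  refine ⟨(a / c) ^ q / q, fun r hr => ?_⟩
  have hyoung :=
    Real.young_inequality_of_nonneg (div_nonneg ha hc.le) (mul_nonneg hc.le hr) hpq.symm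
  rw [Real.mul_rpow hc.le hr, mul_div_right_comm, hcp] at hyoung
  have hprod : a / c * (c * r) = a * r := by field_simp
  linarith

section InnerProductSpace

variable {E : Type*} [NormedAddCommGroup E] [InnerProductSpace ℝ E]

theorem ConvexOn.inner_sub_le_sub_of_hasGradientAt [CompleteSpace E] {g : E → ℝ}
    (hg : ConvexOn ℝ univ g) {x g' : E} (hg' : HasGradientAt g g' x) (y : E) :
    ⟪g', y - x⟫ ≤ g y - g x := by
  set φ : ℝ → ℝ := g ∘ AffineMap.lineMap x y
  have hφ : ConvexOn ℝ univ φ := by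
    simpa using hg.comp_affineMap (AffineMap.lineMap x y)
  have hφ' : HasDerivAt φ ⟪g', y - x⟫ 0 := by
    have hline : HasDerivAt (AffineMap.lineMap x y : ℝ → E) (y - x) 0 :=
      AffineMap.hasDerivAt_lineMap
    have hfderiv :
        HasFDerivAt g (InnerProductSpace.toDual ℝ E g') (AffineMap.lineMap x y (0 : ℝ)) := by
      simpa using hasGradientAt_iff_hasFDerivAt.mp hg'
    simpa [φ] using hfderiv.comp_hasDerivAt (0 : ℝ) hline
  simpa [φ, slope_def_field] using
    hφ.le_slope_of_hasDerivAt (mem_univ 0) (mem_univ 1) zero_lt_one hφ'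

theorem HasGradientAt.eq_of_forall_inner_sub_le [CompleteSpace E] {h : E → ℝ} {x g a : E}
    (hg : HasGradientAt h g x) (ha : ∀ y, ⟪a, y - x⟫ ≤ h y - h x) : g = a := by
  have hmin : IsLocalMin (fun y => h y - ⟪a, y⟫) x :=
    Filter.Eventually.of_forall fun y => by
      have := ha y
      rw [inner_sub_right] at this
      dsimp only
      linarith
  have hderiv : HasFDerivAt (fun y => h y - ⟪a, y⟫)
      (InnerProductSpace.toDual ℝ E g - InnerProductSpace.toDual ℝ E a) x :=
    (hasGradientAt_iff_hasFDerivAt.mp hg).sub (InnerProductSpace.toDual ℝ E a).hasFDerivAt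
  exact (InnerProductSpace.toDual ℝ E).injective (sub_eq_zero.mp (hmin.hasFDerivAt_eq_zero hderiv))

def convexConjugate (f : E → ℝ) (ζ : E) : ℝ := ⨆ η, ⟪ζ, η⟫ - f η

variable {f : E → ℝ}

theorem bddAbove_range_inner_sub_of_mul_rpow_le {p α : ℝ} (hp : 1 < p) (hα : 0 < α)
    (hf : ∀ η, α * ‖η‖ ^ p ≤ f η) (ζ : E) : BddAbove (range fun η => ⟪ζ, η⟫ - f η) := by
  obtain ⟨C, hC⟩ := exists_mul_sub_mul_rpow_le hp hα (norm_nonneg ζ)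
  refine ⟨C, forall_mem_range.2 fun η => ?_⟩
  linarith [real_inner_le_norm ζ η, hf η, hC ‖η‖ (norm_nonneg η)]

theorem inner_sub_le_convexConjugate {ζ : E} (hζ : BddAbove (range fun η => ⟪ζ, η⟫ - f η))
    (η : E) : ⟪ζ, η⟫ - f η ≤ convexConjugate f ζ :=
  le_ciSup hζ η

theorem convexOn_convexConjugate (hf : ∀ ζ : E, BddAbove (range fun η => ⟪ζ, η⟫ - f η)) :
    ConvexOn ℝ univ (convexConjugate f) := by
  refine ⟨convex_univ, fun a _ b _ s t hs ht hst => ciSup_le fun η => ?_⟩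
  have ha := mul_le_mul_of_nonneg_left (inner_sub_le_convexConjugate (hf a) η) hs
  have hb := mul_le_mul_of_nonneg_left (inner_sub_le_convexConjugate (hf b) η) ht
  calc ⟪s • a + t • b, η⟫ - f η
      = s * (⟪a, η⟫ - f η) + t * (⟪b, η⟫ - f η) := by
        rw [inner_add_left, real_inner_smul_left, real_inner_smul_left]
        linear_combination (f η) * hst
    _ ≤ s • convexConjugate f a + t • convexConjugate f b := by
        simp only [smul_eq_mul]; linarith

theorem convexConjugate_eq_of_forall_inner_sub_le {σ ξ : E}
    (h : ∀ η, ⟪σ, η - ξ⟫ ≤ f η - f ξ) : convexConjugate f σ = ⟪σ, ξ⟫ - f ξ :=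
  IsGreatest.csSup_eq ⟨mem_range_self ξ, forall_mem_range.2 fun η => by
    linarith [h η, inner_sub_right (𝕜 := ℝ) σ η ξ]⟩

end InnerProductSpace

theorem stmt_0_general (N : ℕ) (p : ℝ) (hp : 1 < p)
    (f : EuclideanSpace ℝ (Fin N) → ℝ)
    (hconv : ConvexOn ℝ Set.univ f)
    (α : ℝ) (hα : 0 < α)
    (hgrowl : ∀ ξ : EuclideanSpace ℝ (Fin N), α * ‖ξ‖ ^ p ≤ f ξ)
    (f' : EuclideanSpace ℝ (Fin N) → EuclideanSpace ℝ (Fin N))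
    (hf' : ∀ x, HasGradientAt f (f' x) x)
    (fstar : EuclideanSpace ℝ (Fin N) → ℝ)
    (hfstar : ∀ ζ, fstar ζ = ⨆ ξ : EuclideanSpace ℝ (Fin N), ((inner ℝ ζ ξ : ℝ) - f ξ))
    (ξ τ σ : EuclideanSpace ℝ (Fin N)) (hσ : σ = f' ξ)
    (gτ gσ : EuclideanSpace ℝ (Fin N))
    (hgτ : HasGradientAt fstar gτ τ) (hgσ : HasGradientAt fstar gσ σ) :
    f ξ + fstar τ - (inner ℝ τ ξ : ℝ) ≤ (inner ℝ (τ - σ) (gτ - gσ) : ℝ) := by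
  have hbdd := bddAbove_range_inner_sub_of_mul_rpow_le hp hα hgrowl
  obtain rfl : fstar = convexConjugate f := funext hfstar
  have hfenchel : convexConjugate f σ = ⟪σ, ξ⟫ - f ξ :=
    convexConjugate_eq_of_forall_inner_sub_le <|
      hconv.inner_sub_le_sub_of_hasGradientAt (hσ ▸ hf' ξ)
  obtain rfl : gσ = ξ := hgσ.eq_of_forall_inner_sub_le fun ζ => by
    linarith [inner_sub_le_convexConjugate (hbdd ζ) ξ, inner_sub_right (𝕜 := ℝ) ξ ζ σ,
      real_inner_comm ξ ζ, real_inner_comm ξ σ]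
  have hτ := (convexOn_convexConjugate hbdd).inner_sub_le_sub_of_hasGradientAt hgτ σ
  simp only [inner_sub_left, inner_sub_right] at hτ ⊢
  linarith [real_inner_comm τ gτ, real_inner_comm σ gτ]

theorem stmt_0 (N : ℕ) (hN : 1 ≤ N) (p : ℝ) (hp : 1 < p)
    (f : EuclideanSpace ℝ (Fin N) → ℝ)
    (hconv : ConvexOn ℝ Set.univ f)
    (α β : ℝ) (hα : 0 < α) (hβ : 0 < β)
    (hgrowl : ∀ ξ : EuclideanSpace ℝ (Fin N), α * ‖ξ‖ ^ p ≤ f ξ)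
    (hgrowu : ∀ ξ : EuclideanSpace ℝ (Fin N), f ξ ≤ β * (‖ξ‖ ^ p + 1))
    (f' : EuclideanSpace ℝ (Fin N) → EuclideanSpace ℝ (Fin N))
    (hf' : ∀ x, HasGradientAt f (f' x) x)
    (fstar : EuclideanSpace ℝ (Fin N) → ℝ)
    (hfstar : ∀ ζ, fstar ζ = ⨆ ξ : EuclideanSpace ℝ (Fin N), ((inner ℝ ζ ξ : ℝ) - f ξ))
    (ξ τ σ : EuclideanSpace ℝ (Fin N)) (hσ : σ = f' ξ)
    (gτ gσ : EuclideanSpace ℝ (Fin N))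
    (hgτ : HasGradientAt fstar gτ τ) (hgσ : HasGradientAt fstar gσ σ) :
    f ξ + fstar τ - (inner ℝ τ ξ : ℝ) ≤ (inner ℝ (τ - σ) (gτ - gσ) : ℝ) :=
  stmt_0_general N p hp f hconv α hα hgrowl f' hf' fstar hfstar ξ τ σ hσ gτ gσ hgτ hgσ
end
end

section
/- Let N ≥ 1, 1 < p < ∞ and q := p/(p−1). Let f : ℝ^N → ℝ be convex, positively p-homogeneous, and satisfy α|ξ|^p ≤ f(ξ) for all ξ ∈ ℝ^N and some α > 0 (so that f ≥ 0 and the convex conjugate f* is real-valued and nonnegative). Then for all z, w ∈ ℝ^N one has z·w ≤ p^{1/p} q^{1/q} f(z)^{1/p} f*(w)^{1/q}. -/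
/-!
Fenchel–Young at the point `t • z`, combined with `p`-homogeneity, gives
`t ⟪z, w⟫ ≤ t ^ p f z + f* w` for every `t > 0`; minimising the right-hand side over `t`
yields exactly `p ^ (1/p) q ^ (1/q) (f z) ^ (1/p) (f* w) ^ (1/q)`. The coercivity bound
`α ‖ξ‖ ^ p ≤ f ξ` together with Young's inequality makes `f*` finite.
-/

open Set Filter

noncomputable section

namespace Real

theorem le_rpow_mul_rpow_of_forall_mul_le_of_pos {p q a b x : ℝ} (hpq : p.HolderConjugate q)
    (ha : 0 < a) (hb : 0 < b) (h : ∀ t > 0, t * x ≤ t ^ p * a + b) :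
    x ≤ p ^ (1 / p) * q ^ (1 / q) * a ^ (1 / p) * b ^ (1 / q) := by
  have hp := hpq.pos
  have hq := hpq.symm.pos
  -- the minimiser of `t ↦ t ^ (p - 1) * a + b / t`
  set t := ((q - 1) * b / a) ^ (1 / p)
  have hq1 : 0 < q - 1 := sub_pos.2 hpq.symm.lt
  have ht : 0 < t := by positivity
  have htp : t ^ p * a + b = q * b := by
    rw [← rpow_mul (by positivity), one_div_mul_cancel hp.ne', rpow_one]
    field_simp
    ring
  have hqp : (q - 1) * p = q := hpq.symm.sub_one_mul_conj
  have hkey : t * (p ^ (1 / p) * q ^ (1 / q) * a ^ (1 / p) * b ^ (1 / q)) = q * b := by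
    calc t * (p ^ (1 / p) * q ^ (1 / q) * a ^ (1 / p) * b ^ (1 / q))
        = ((q - 1) * b / a * p * a) ^ (1 / p) * (q * b) ^ (1 / q) := by
          rw [mul_rpow (by positivity) ha.le, mul_rpow (by positivity) hp.le,
            mul_rpow hq.le hb.le]
          ring
      _ = (q * b) ^ (1 / p) * (q * b) ^ (1 / q) := by
          congr 2
          rw [div_mul_eq_mul_div, div_mul_cancel₀ _ ha.ne']
          linear_combination b * hqp
      _ = q * b := by
          rw [← rpow_add (by positivity), one_div, one_div, hpq.inv_add_inv_eq_one, rpow_one]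
  rw [← mul_le_mul_iff_right₀ ht, hkey, ← htp]
  exact h t ht

theorem le_rpow_mul_rpow_of_forall_mul_le {p q a b x : ℝ} (hpq : p.HolderConjugate q)
    (ha : 0 ≤ a) (hb : 0 ≤ b) (h : ∀ t > 0, t * x ≤ t ^ p * a + b) :
    x ≤ p ^ (1 / p) * q ^ (1 / q) * a ^ (1 / p) * b ^ (1 / q) := by
  have hp := hpq.pos
  have hq := hpq.symm.pos
  -- the cases `a = 0` or `b = 0` follow from `a + ε, b + ε` by letting `ε → 0⁺`
  have hcont : ContinuousAt
      (fun ε : ℝ => p ^ (1 / p) * q ^ (1 / q) * (a + ε) ^ (1 / p) * (b + ε) ^ (1 / q)) 0 := by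
    apply ContinuousAt.mul
    · apply ContinuousAt.mul continuousAt_const
      exact (continuousAt_rpow_const _ _ (Or.inr (by positivity))).comp (by fun_prop)
    · exact (continuousAt_rpow_const _ _ (Or.inr (by positivity))).comp (by fun_prop)
  have hlim := (hcont.tendsto.mono_left (nhdsWithin_le_nhds (s := Ioi 0)))
  simp only [add_zero] at hlim
  refine ge_of_tendsto hlim (eventually_nhdsWithin_of_forall fun ε (hε : 0 < ε) => ?_)
  refine le_rpow_mul_rpow_of_forall_mul_le_of_pos hpq (by positivity) (by positivity) fun t ht => ?_
  nlinarith [h t ht, rpow_nonneg ht.le p]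

end Real

theorem map_zero_of_rpow_homogeneous {E : Type*} [AddCommGroup E] [Module ℝ E] {f : E → ℝ}
    {p : ℝ} (hp : p ≠ 0) (hhom : ∀ t : ℝ, 0 < t → ∀ ξ : E, f (t • ξ) = t ^ p * f ξ) : f 0 = 0 := by
  have h2 : f 0 = 2 ^ p * f 0 := by simpa using hhom 2 two_pos 0
  have h2p : (2 : ℝ) ^ p ≠ 1 := by
    rwa [Ne, ← Real.rpow_zero 2, Real.rpow_right_inj two_pos (by norm_num)]
  have : (1 - 2 ^ p) * f 0 = 0 := by linear_combination h2
  exact (mul_eq_zero.1 this).resolve_left (sub_ne_zero.2 h2p.symm)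

theorem bddAbove_range_inner_sub_of_rpow_le {E : Type*} [NormedAddCommGroup E]
    [InnerProductSpace ℝ E] {f : E → ℝ} {p α : ℝ} (hp : 1 < p) (hα : 0 < α)
    (hgrow : ∀ ξ, α * ‖ξ‖ ^ p ≤ f ξ) (w : E) :
    BddAbove (range fun ξ => inner ℝ w ξ - f ξ) := by
  have hpq := Real.HolderConjugate.conjExponent hp
  set δ := (p * α) ^ (1 / p)
  have hδ : 0 < δ := by positivity
  have hδp : δ ^ p = p * α := by
    rw [← Real.rpow_mul (by positivity), one_div_mul_cancel hpq.ne_zero, Real.rpow_one]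
  refine ⟨(‖w‖ / δ) ^ p.conjExponent / p.conjExponent, ?_⟩
  rintro _ ⟨ξ, rfl⟩
  have hyoung := Real.young_inequality_of_nonneg (mul_nonneg hδ.le (norm_nonneg ξ))
    (div_nonneg (norm_nonneg w) hδ.le) hpq
  have : (δ * ‖ξ‖) ^ p / p = α * ‖ξ‖ ^ p := by
    rw [Real.mul_rpow hδ.le (norm_nonneg _), hδp]
    field_simp
  have : δ * ‖ξ‖ * (‖w‖ / δ) = ‖w‖ * ‖ξ‖ := by field_simp
  nlinarith [real_inner_le_norm w ξ, hgrow ξ]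

theorem stmt_3_general (N : ℕ) (p q : ℝ) (hp : 1 < p) (hq : q = p / (p - 1))
    (f : EuclideanSpace ℝ (Fin N) → ℝ)
    (hhom : ∀ t : ℝ, 0 < t → ∀ ξ : EuclideanSpace ℝ (Fin N), f (t • ξ) = t ^ p * f ξ)
    (α : ℝ) (hα : 0 < α)
    (hgrow : ∀ ξ : EuclideanSpace ℝ (Fin N), α * ‖ξ‖ ^ p ≤ f ξ)
    (fstar : EuclideanSpace ℝ (Fin N) → ℝ)
    (hfstar : ∀ ζ, fstar ζ = ⨆ ξ : EuclideanSpace ℝ (Fin N), ((inner ℝ ζ ξ : ℝ) - f ξ)) :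
    ∀ z w : EuclideanSpace ℝ (Fin N),
      (inner ℝ z w : ℝ) ≤ p ^ (1 / p) * q ^ (1 / q) * (f z) ^ (1 / p) * (fstar w) ^ (1 / q) := by
  intro z w
  have hpq : p.HolderConjugate q := hq ▸ Real.HolderConjugate.conjExponent hp
  have fenchel_young : ∀ ξ, inner ℝ w ξ - f ξ ≤ fstar w := fun ξ =>
    hfstar w ▸ le_ciSup (bddAbove_range_inner_sub_of_rpow_le hp hα hgrow w) ξ
  have hfz : 0 ≤ f z := (by positivity : 0 ≤ α * ‖z‖ ^ p).trans (hgrow z)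
  have hfstar_nonneg : 0 ≤ fstar w := by
    simpa [map_zero_of_rpow_homogeneous hpq.ne_zero hhom] using fenchel_young 0
  refine Real.le_rpow_mul_rpow_of_forall_mul_le hpq hfz hfstar_nonneg fun t ht => ?_
  have := fenchel_young (t • z)
  rw [real_inner_smul_right, hhom t ht z, real_inner_comm] at this
  linarith

theorem stmt_3 (N : ℕ) (hN : 1 ≤ N) (p q : ℝ) (hp : 1 < p) (hq : q = p / (p - 1))
    (f : EuclideanSpace ℝ (Fin N) → ℝ)
    (hconv : ConvexOn ℝ Set.univ f)
    (hhom : ∀ t : ℝ, 0 < t → ∀ ξ : EuclideanSpace ℝ (Fin N), f (t • ξ) = t ^ p * f ξ)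
    (α : ℝ) (hα : 0 < α)
    (hgrow : ∀ ξ : EuclideanSpace ℝ (Fin N), α * ‖ξ‖ ^ p ≤ f ξ)
    (fstar : EuclideanSpace ℝ (Fin N) → ℝ)
    (hfstar : ∀ ζ, fstar ζ = ⨆ ξ : EuclideanSpace ℝ (Fin N), ((inner ℝ ζ ξ : ℝ) - f ξ)) :
    ∀ z w : EuclideanSpace ℝ (Fin N),
      (inner ℝ z w : ℝ) ≤ p ^ (1 / p) * q ^ (1 / q) * (f z) ^ (1 / p) * (fstar w) ^ (1 / q) :=
  stmt_3_general N p q hp hq f hhom α hα hgrow fstar hfstar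
end
end

section
/- Let m ≥ 1 be an integer. There exists a constant C > 0 depending only on m with the following property: for every nonempty set Γ ⊆ ℝ² that can be written as Γ = Γ_1 ∪ … ∪ Γ_m, where each Γ_i is connected and each nonempty Γ_i contains at least two points, and which satisfies H^1(Γ) < ∞, there exist an integer k ≤ m, points x_1, …, x_k ∈ ℝ² and radii r_1, …, r_k > 0 such that: (a) Γ ⊆ ⋃_{i=1}^k B(x_i, r_i) (open balls); (b) r_i ≤ C · H^1(Γ ∩ B(x_i, r_i)) for every i; and (c) the closed balls of center x_i and radius 2r_i, i = 1, …, k, are pairwise disjoint. -/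
/-!
For `a` in a connected piece `Γᵢ`, the image of `Γᵢ` under the 1-Lipschitz map `dist · a` is an
interval starting at `0`, so every point of `Γᵢ` lies within `H¹(Γᵢ)` of `a`. If `Γᵢ` has two
points this gives a ball of radius `ρ = 2 H¹(Γᵢ) > 0` containing `Γᵢ`, so `ρ ≤ 2 H¹(Γ ∩ B)`.
While two of these at most `m` balls have meeting doubles, replace them by the ball concentric
with the larger one (radius `r`) of radius `5r`: it contains both, and the number of balls drops.
After at most `m` merges the doubles are disjoint and the constant is at most `2 · 5ᵐ`.
-/

open Set MeasureTheory Metric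

theorem Finset.card_insert_sdiff_pair_lt {α : Type*} [DecidableEq α] {s : Finset α} {p q : α}
    (hp : p ∈ s) (hq : q ∈ s) (hpq : p ≠ q) (x : α) : (insert x (s \ {p, q})).card < s.card := by
  have hsub : {p, q} ⊆ s := Finset.insert_subset hp (Finset.singleton_subset_iff.2 hq)
  have hle := Finset.card_le_card hsub
  have hsdiff := Finset.card_sdiff_of_subset hsub
  rw [Finset.card_pair hpq] at hle hsdiff
  have := Finset.card_insert_le x (s \ {p, q})
  omega

section HausdorffLength

variable {X : Type*} [MetricSpace X] [MeasurableSpace X] [BorelSpace X] {s Γ : Set X}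

theorem IsPreconnected.ofReal_dist_le_hausdorffMeasure (hs : IsPreconnected s) {a b : X}
    (ha : a ∈ s) (hb : b ∈ s) : ENNReal.ofReal (dist a b) ≤ μH[1] s := by
  have hlip : LipschitzWith 1 (fun y : X => dist y a) := LipschitzWith.dist_left a
  have hIcc : Icc 0 (dist b a) ⊆ (fun y => dist y a) '' s :=
    (hs.image _ hlip.continuous.continuousOn).Icc_subset ⟨a, ha, dist_self a⟩ ⟨b, hb, rfl⟩
  calc ENNReal.ofReal (dist a b) = μH[1] (Icc 0 (dist b a)) := by
        rw [hausdorffMeasure_real, Real.volume_Icc, sub_zero, dist_comm]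
    _ ≤ μH[1] ((fun y => dist y a) '' s) := measure_mono hIcc
    _ ≤ μH[1] s := by simpa using hlip.hausdorffMeasure_image_le zero_le_one s

theorem IsPreconnected.dist_le_toReal_hausdorffMeasure (hs : IsPreconnected s)
    (hfin : μH[1] s ≠ ⊤) {a b : X} (ha : a ∈ s) (hb : b ∈ s) :
    dist a b ≤ (μH[1] s).toReal :=
  (ENNReal.ofReal_le_iff_le_toReal hfin).1 (hs.ofReal_dist_le_hausdorffMeasure ha hb)

theorem IsPreconnected.exists_ball_radius_le_hausdorffMeasure (hs : IsPreconnected s)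
    (hnt : s.Nontrivial) (hsΓ : s ⊆ Γ) (hΓ : μH[1] Γ ≠ ⊤) :
    ∃ p : X × ℝ, 0 < p.2 ∧ s ⊆ ball p.1 p.2 ∧
      p.2 ≤ 2 * (μH[1] (Γ ∩ ball p.1 p.2)).toReal := by
  obtain ⟨a, ha, b, hb, hab⟩ := hnt
  have hfin : μH[1] s ≠ ⊤ := ne_top_of_le_ne_top hΓ (measure_mono hsΓ)
  set L := (μH[1] s).toReal
  have hL : 0 < L := (dist_pos.2 hab).trans_le (hs.dist_le_toReal_hausdorffMeasure hfin ha hb)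
  have hball : s ⊆ ball a (2 * L) := fun z hz =>
    mem_ball.2 ((hs.dist_le_toReal_hausdorffMeasure hfin hz ha).trans_lt (by linarith))
  refine ⟨(a, 2 * L), by positivity, hball, ?_⟩
  have hmono : L ≤ (μH[1] (Γ ∩ ball a (2 * L))).toReal :=
    ENNReal.toReal_mono (ne_top_of_le_ne_top hΓ (measure_mono inter_subset_left))
      (measure_mono (subset_inter hsΓ hball))
  exact mul_le_mul_of_nonneg_left hmono zero_le_two

end HausdorffLength

section BallCovers

variable {X : Type*} [MetricSpace X] [MeasurableSpace X] {μ : Measure X} {Γ : Set X} {c : ℝ}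
  {s : Finset (X × ℝ)}

/-- A pair `p` stands for the open ball `ball p.1 p.2`. -/
structure IsControlledBallCover (μ : Measure X) (Γ : Set X) (c : ℝ) (s : Finset (X × ℝ)) :
    Prop where
  radius_pos : ∀ p ∈ s, 0 < p.2
  subset_iUnion : Γ ⊆ ⋃ p ∈ s, ball p.1 p.2
  radius_le : ∀ p ∈ s, p.2 ≤ c * (μ (Γ ∩ ball p.1 p.2)).toReal

def HasDisjointDoubles (s : Finset (X × ℝ)) : Prop :=
  (s : Set (X × ℝ)).Pairwise fun p q =>
    Disjoint (closedBall p.1 (2 * p.2)) (closedBall q.1 (2 * q.2))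

namespace IsControlledBallCover

theorem mono_const (h : IsControlledBallCover μ Γ c s) {c' : ℝ} (hc : c ≤ c') :
    IsControlledBallCover μ Γ c' s where
  radius_pos := h.radius_pos
  subset_iUnion := h.subset_iUnion
  radius_le p hp :=
    (h.radius_le p hp).trans (mul_le_mul_of_nonneg_right hc ENNReal.toReal_nonneg)

theorem exists_of_iUnion {ι : Type*} [Fintype ι] (Γi : ι → Set X) (hΓ : Γ = ⋃ i, Γi i)
    (hball : ∀ i, (Γi i).Nonempty → ∃ p : X × ℝ, 0 < p.2 ∧ Γi i ⊆ ball p.1 p.2 ∧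
      p.2 ≤ c * (μ (Γ ∩ ball p.1 p.2)).toReal) :
    ∃ s : Finset (X × ℝ), s.card ≤ Fintype.card ι ∧ IsControlledBallCover μ Γ c s := by
  classical
  choose p hp using fun i : {i // (Γi i).Nonempty} => hball i i.2
  refine ⟨Finset.univ.image p, Finset.card_image_le.trans (Fintype.card_subtype_le _), ?_, ?_, ?_⟩
  · simpa only [Finset.forall_mem_image, Finset.mem_univ, true_implies] using fun i => (hp i).1
  · rw [hΓ]
    rintro z ⟨_, ⟨i, rfl⟩, hz⟩
    exact mem_biUnion (Finset.mem_image_of_mem p (Finset.mem_univ ⟨i, z, hz⟩))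
      ((hp ⟨i, z, hz⟩).2.1 hz)
  · simpa only [Finset.forall_mem_image, Finset.mem_univ, true_implies] using fun i => (hp i).2.2

theorem merge [DecidableEq X] (h : IsControlledBallCover μ Γ c s) (hΓ : μ Γ ≠ ⊤)
    {p q : X × ℝ} (hp : p ∈ s) (hq : q ∈ s) (hqp : q.2 ≤ p.2)
    (hpq : ¬ Disjoint (closedBall p.1 (2 * p.2)) (closedBall q.1 (2 * q.2))) :
    IsControlledBallCover μ Γ (5 * c) (insert (p.1, 5 * p.2) (s \ {p, q})) := by
  obtain ⟨y, hyp, hyq⟩ := not_disjoint_iff.1 hpq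
  have hdist : dist q.1 p.1 ≤ 2 * p.2 + 2 * q.2 := by
    have := dist_triangle q.1 y p.1
    rw [dist_comm q.1 y] at this
    linarith [mem_closedBall.1 hyp, mem_closedBall.1 hyq]
  have hp0 := h.radius_pos p hp
  have hq0 := h.radius_pos q hq
  refine ⟨?_, ?_, ?_⟩
  · simp only [Finset.mem_insert, Finset.mem_sdiff]
    rintro w (rfl | ⟨hw, -⟩)
    · positivity
    · exact h.radius_pos w hw
  · intro z hz
    obtain ⟨w, hw, hzw⟩ := mem_iUnion₂.1 (h.subset_iUnion hz)
    by_cases hwpq : w = p ∨ w = q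
    · refine mem_biUnion (Finset.mem_insert_self _ _) (mem_ball.2 ?_)
      rcases hwpq with rfl | rfl
      · linarith [mem_ball.1 hzw]
      · linarith [mem_ball.1 hzw, dist_triangle z w.1 p.1]
    · refine mem_biUnion (Finset.mem_insert_of_mem (Finset.mem_sdiff.2 ⟨hw, ?_⟩)) hzw
      simpa using hwpq
  · simp only [Finset.mem_insert, Finset.mem_sdiff]
    rintro w (rfl | ⟨hw, -⟩)
    · have hmono : (μ (Γ ∩ ball p.1 p.2)).toReal ≤ (μ (Γ ∩ ball p.1 (5 * p.2))).toReal :=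
        ENNReal.toReal_mono (ne_top_of_le_ne_top hΓ (measure_mono inter_subset_left))
          (measure_mono (inter_subset_inter_right _ (ball_subset_ball (by linarith))))
      have hc : 0 < c :=
        pos_of_mul_pos_left (hp0.trans_le (h.radius_le p hp)) ENNReal.toReal_nonneg
      have := h.radius_le p hp
      nlinarith
    · have := h.radius_le w hw
      linarith [h.radius_pos w hw]

theorem exists_hasDisjointDoubles (h : IsControlledBallCover μ Γ c s)
    (hΓ : μ Γ ≠ ⊤) (hc : 0 ≤ c) :
    ∃ t : Finset (X × ℝ), t.card ≤ s.card ∧ IsControlledBallCover μ Γ (5 ^ s.card * c) t ∧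
      HasDisjointDoubles t := by
  classical
  induction hn : s.card using Nat.strong_induction_on generalizing s c with
  | _ n ih =>
  by_cases hd : HasDisjointDoubles s
  · exact ⟨s, hn.le, h.mono_const (le_mul_of_one_le_left hc (one_le_pow₀ (by norm_num))), hd⟩
  obtain ⟨p, hp, q, hq, hpq, hmeet, hqp⟩ : ∃ p ∈ s, ∃ q ∈ s, p ≠ q ∧
      ¬ Disjoint (closedBall p.1 (2 * p.2)) (closedBall q.1 (2 * q.2)) ∧ q.2 ≤ p.2 := by
    obtain ⟨p, hp, q, hq, hpq, hmeet⟩ : ∃ p ∈ s, ∃ q ∈ s, p ≠ q ∧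
        ¬ Disjoint (closedBall p.1 (2 * p.2)) (closedBall q.1 (2 * q.2)) := by
      simpa [HasDisjointDoubles, Set.Pairwise] using hd
    rcases le_total q.2 p.2 with hqp | hpq'
    · exact ⟨p, hp, q, hq, hpq, hmeet, hqp⟩
    · exact ⟨q, hq, p, hp, hpq.symm, fun h' => hmeet h'.symm, hpq'⟩
  have hlt := Finset.card_insert_sdiff_pair_lt hp hq hpq (p.1, 5 * p.2)
  obtain ⟨t, htcard, ht, htd⟩ :=
    ih _ (hn ▸ hlt) (h.merge hΓ hp hq hqp hmeet) (by positivity) rfl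
  refine ⟨t, by omega, ht.mono_const ?_, htd⟩
  rw [← mul_assoc, ← pow_succ]
  exact mul_le_mul_of_nonneg_right (pow_le_pow_right₀ (by norm_num) (by omega)) hc

end IsControlledBallCover

end BallCovers

theorem stmt_6_general (m : ℕ) :
    ∃ C > (0 : ℝ), ∀ (Γ : Set (EuclideanSpace ℝ (Fin 2)))
      (Γi : Fin m → Set (EuclideanSpace ℝ (Fin 2))),
      Γ.Nonempty →
      Γ = ⋃ i, Γi i →
      (∀ i, IsPreconnected (Γi i)) →
      (∀ i, (Γi i).Nonempty → (Γi i).Nontrivial) →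
      μH[1] Γ < ⊤ →
      ∃ k : ℕ, k ≤ m ∧
        ∃ (x : Fin k → EuclideanSpace ℝ (Fin 2)) (r : Fin k → ℝ),
          (∀ i, 0 < r i) ∧
          Γ ⊆ ⋃ i, ball (x i) (r i) ∧
          (∀ i, r i ≤ C * (μH[1] (Γ ∩ ball (x i) (r i))).toReal) ∧
          Pairwise fun i j =>
            Disjoint (closedBall (x i) (2 * r i)) (closedBall (x j) (2 * r j)) := by
  refine ⟨5 ^ m * 2, by positivity, ?_⟩
  intro Γ Γi _ hΓ hconn hnt hfin
  obtain ⟨s, hscard, hs⟩ := IsControlledBallCover.exists_of_iUnion (μ := μH[1]) Γi hΓ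
    fun i hi => (hconn i).exists_ball_radius_le_hausdorffMeasure (hnt i hi)
      (hΓ ▸ subset_iUnion Γi i) hfin.ne
  rw [Fintype.card_fin] at hscard
  obtain ⟨t, htcard, ht, htd⟩ := hs.exists_hasDisjointDoubles hfin.ne zero_le_two
  have ht := ht.mono_const (mul_le_mul_of_nonneg_right
    (pow_le_pow_right₀ (by norm_num) hscard) zero_le_two)
  let e := t.equivFin.symm
  refine ⟨t.card, htcard.trans hscard, fun i => (e i).1.1, fun i => (e i).1.2,
    fun i => ht.radius_pos _ (e i).2, fun z hz => ?_, fun i => ht.radius_le _ (e i).2,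
    fun i j hij => htd (e i).2 (e j).2 (Subtype.coe_injective.ne (e.injective.ne hij))⟩
  obtain ⟨p, hp, hzp⟩ := mem_iUnion₂.1 (ht.subset_iUnion hz)
  exact mem_iUnion.2 ⟨e.symm ⟨p, hp⟩, by simpa using hzp⟩

theorem stmt_6 (m : ℕ) (hm : 1 ≤ m) :
    ∃ C > (0 : ℝ), ∀ (Γ : Set (EuclideanSpace ℝ (Fin 2)))
      (Γi : Fin m → Set (EuclideanSpace ℝ (Fin 2))),
      Γ.Nonempty →
      Γ = ⋃ i, Γi i →
      (∀ i, IsPreconnected (Γi i)) →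
      (∀ i, (Γi i).Nonempty → (Γi i).Nontrivial) →
      μH[1] Γ < ⊤ →
      ∃ k : ℕ, k ≤ m ∧
        ∃ (x : Fin k → EuclideanSpace ℝ (Fin 2)) (r : Fin k → ℝ),
          (∀ i, 0 < r i) ∧
          Γ ⊆ ⋃ i, ball (x i) (r i) ∧
          (∀ i, r i ≤ C * (μH[1] (Γ ∩ ball (x i) (r i))).toReal) ∧
          Pairwise fun i j =>
            Disjoint (closedBall (x i) (2 * r i)) (closedBall (x j) (2 * r j)) :=
  stmt_6_general m
end

section
/- Let M > 1, let b ∈ [1, M], and let v : ℝ → ℝ be continuously differentiable on an open neighborhood of [0, b]. Then for every y ∈ [0, b] one has ∫_0^y v(t)² dt ≤ 2M ∫_0^1 v(t)² dt + 2M² ∫_0^b v'(t)² dt. -/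
/-!
Write `v t = v s + ∫ x in s..t, v' x`. By Cauchy–Schwarz, `(v t - v s)² ≤ b ∫₀ᵇ v'²`
for `s, t ∈ [0, b]`, hence `v t² ≤ 2 v s² + 2 b ∫₀ᵇ v'²`. Averaging over `s ∈ [0, 1]`
bounds `v t²` uniformly on `[0, b]` by `2 ∫₀¹ v² + 2 b ∫₀ᵇ v'²`, and integrating over
`[0, y]` with `y ≤ b ≤ M` gives the estimate.
-/

open Set MeasureTheory intervalIntegral

theorem sq_intervalIntegral_le_mul_integral_sq {g : ℝ → ℝ} {a b : ℝ} (hab : a ≤ b)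
    (hg : ContinuousOn g (Icc a b)) :
    (∫ t in a..b, g t) ^ 2 ≤ (b - a) * ∫ t in a..b, g t ^ 2 := by
  rcases hab.eq_or_lt with rfl | hlt
  · simp
  have : NeZero (volume.restrict (Ioc a b)) := ⟨by simp [Measure.restrict_eq_zero, hlt]⟩
  have jensen : (⨍ t in Ioc a b, g t) ^ 2 ≤ ⨍ t in Ioc a b, g t ^ 2 :=
    (even_two.convexOn_pow).map_average_le (continuousOn_pow 2) isClosed_univ
      (by simp) (hg.integrableOn_Icc.mono_set Ioc_subset_Icc_self)
      ((hg.pow 2).integrableOn_Icc.mono_set Ioc_subset_Icc_self)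
  have hlen : 0 < b - a := sub_pos.2 hlt
  rwa [setAverage_eq, setAverage_eq, Real.volume_real_Ioc_of_le hab, ← integral_of_le hab,
    ← integral_of_le hab, smul_eq_mul, smul_eq_mul, mul_pow, sq (b - a)⁻¹, mul_assoc,
    mul_le_mul_iff_right₀ (inv_pos.2 hlen), inv_mul_le_iff₀ hlen] at jensen

theorem sq_sub_le_mul_integral_sq_deriv {f f' : ℝ → ℝ} {a b s t : ℝ}
    (hf : ∀ x ∈ Icc a b, HasDerivAt f (f' x) x) (hf' : ContinuousOn f' (Icc a b))
    (hs : s ∈ Icc a b) (ht : t ∈ Icc a b) :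
    (f t - f s) ^ 2 ≤ (b - a) * ∫ x in a..b, f' x ^ 2 := by
  wlog hst : s ≤ t generalizing s t
  · rw [← neg_sub, neg_sq]
    exact this ht hs (le_of_not_ge hst)
  have hsub : Icc s t ⊆ Icc a b := Icc_subset_Icc hs.1 ht.2
  have ftc : ∫ x in s..t, f' x = f t - f s :=
    integral_eq_sub_of_hasDerivAt (fun x hx => hf x (hsub (uIcc_of_le hst ▸ hx)))
      ((hf'.mono hsub).intervalIntegrable_of_Icc hst)
  calc (f t - f s) ^ 2 = (∫ x in s..t, f' x) ^ 2 := by rw [ftc]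
    _ ≤ (t - s) * ∫ x in s..t, f' x ^ 2 :=
        sq_intervalIntegral_le_mul_integral_sq hst (hf'.mono hsub)
    _ ≤ (b - a) * ∫ x in a..b, f' x ^ 2 := by
        refine mul_le_mul (by linarith [hs.1, ht.2]) ?_
          (integral_nonneg hst fun x _ => sq_nonneg _) (by linarith [hs.1, ht.2])
        exact integral_mono_interval hs.1 hst ht.2
          (Filter.Eventually.of_forall fun x => sq_nonneg _)
          ((hf'.pow 2).intervalIntegrable_of_Icc (hs.1.trans (hst.trans ht.2)))

theorem sq_le_two_mul_integral_sq_add_of_sq_sub_le {f : ℝ → ℝ} {x K : ℝ}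
    (hf : ContinuousOn f (Icc 0 1)) (h : ∀ s ∈ Icc (0 : ℝ) 1, (x - f s) ^ 2 ≤ K) :
    x ^ 2 ≤ 2 * (∫ s in (0 : ℝ)..1, f s ^ 2) + 2 * K := by
  have hf2 : IntervalIntegrable (fun s => 2 * f s ^ 2) volume 0 1 :=
    ((hf.pow 2).intervalIntegrable_of_Icc zero_le_one).const_mul 2
  calc x ^ 2 = ∫ _ in (0 : ℝ)..1, x ^ 2 := by simp
    _ ≤ ∫ s in (0 : ℝ)..1, (2 * f s ^ 2 + 2 * K) :=
        integral_mono_on zero_le_one intervalIntegrable_const (hf2.add intervalIntegrable_const)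
          fun s hs => by nlinarith [h s hs, sq_nonneg (x - 2 * f s)]
    _ = 2 * (∫ s in (0 : ℝ)..1, f s ^ 2) + 2 * K := by
        rw [integral_add hf2 intervalIntegrable_const, intervalIntegral.integral_const_mul]
        simp

theorem integral_sq_le_of_hasDerivAt {f f' : ℝ → ℝ} {M b y : ℝ} (hb : b ∈ Icc 1 M)
    (hf : ∀ x ∈ Icc 0 b, HasDerivAt f (f' x) x) (hf' : ContinuousOn f' (Icc 0 b))
    (hy : y ∈ Icc 0 b) :
    ∫ t in (0 : ℝ)..y, f t ^ 2 ≤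
      2 * M * (∫ t in (0 : ℝ)..1, f t ^ 2) + 2 * M ^ 2 * ∫ t in (0 : ℝ)..b, f' t ^ 2 := by
  set C := ∫ t in (0 : ℝ)..1, f t ^ 2
  set D := ∫ t in (0 : ℝ)..b, f' t ^ 2
  have hunit : Icc (0 : ℝ) 1 ⊆ Icc 0 b := Icc_subset_Icc le_rfl hb.1
  have hcont : ContinuousOn f (Icc 0 1) := fun x hx =>
    (hf x (hunit hx)).continuousAt.continuousWithinAt
  have hpointwise : ∀ t ∈ Icc 0 b, f t ^ 2 ≤ 2 * C + 2 * (b * D) := fun t ht =>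
    sq_le_two_mul_integral_sq_add_of_sq_sub_le hcont fun s hs => by
      simpa only [sub_zero] using sq_sub_le_mul_integral_sq_deriv hf hf' (hunit hs) ht
  have hC : 0 ≤ C := integral_nonneg zero_le_one fun t _ => sq_nonneg _
  have hD : 0 ≤ D := integral_nonneg (by linarith [hb.1]) fun t _ => sq_nonneg _
  have hyb : y * b ≤ M ^ 2 := by nlinarith [hy.1, hy.2, hb.1, hb.2]
  calc ∫ t in (0 : ℝ)..y, f t ^ 2 ≤ (2 * C + 2 * (b * D)) * |y - 0| := by
        refine (Real.le_norm_self _).trans (norm_integral_le_of_norm_le_const fun t ht => ?_)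
        rw [uIoc_of_le hy.1] at ht
        rw [Real.norm_eq_abs, abs_of_nonneg (sq_nonneg _)]
        exact hpointwise t ⟨ht.1.le, ht.2.trans hy.2⟩
    _ ≤ 2 * M * C + 2 * M ^ 2 * D := by
        rw [sub_zero, abs_of_nonneg hy.1]
        nlinarith [mul_le_mul_of_nonneg_right (hy.2.trans hb.2) hC,
          mul_le_mul_of_nonneg_right hyb hD]

theorem stmt_15_general (M b : ℝ) (hb : b ∈ Icc 1 M)
    (v : ℝ → ℝ) (U : Set ℝ) (hU : IsOpen U) (hIccU : Icc 0 b ⊆ U)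
    (hv : ContDiffOn ℝ 1 v U) :
    ∀ y ∈ Icc 0 b,
      ∫ t in (0 : ℝ)..y, (v t) ^ 2 ≤
        2 * M * ∫ t in (0 : ℝ)..1, (v t) ^ 2 + 2 * M ^ 2 * ∫ t in (0 : ℝ)..b, (deriv v t) ^ 2 := by
  intro y hy
  have hderiv : ∀ x ∈ Icc 0 b, HasDerivAt v (deriv v x) x := fun x hx =>
    ((hv.differentiableOn one_ne_zero).differentiableAt (hU.mem_nhds (hIccU hx))).hasDerivAt
  have hv2 : IntervalIntegrable (fun t => v t ^ 2) volume 0 1 :=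
    ((hv.continuousOn.mono ((Icc_subset_Icc le_rfl hb.1).trans hIccU)).pow 2
      |>.intervalIntegrable_of_Icc zero_le_one)
  set C := ∫ t in (0 : ℝ)..1, v t ^ 2
  set D := ∫ t in (0 : ℝ)..b, deriv v t ^ 2
  have hD : 0 ≤ D := integral_nonneg (by linarith [hb.1]) fun t _ => sq_nonneg _
  have hM : M ^ 2 ≤ 2 * M * M ^ 2 := by nlinarith [hb.1.trans hb.2]
  calc ∫ t in (0 : ℝ)..y, v t ^ 2 ≤ 2 * M * C + 2 * M ^ 2 * D :=
        integral_sq_le_of_hasDerivAt hb hderiv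
          ((hv.continuousOn_deriv_of_isOpen hU le_rfl).mono hIccU) hy
    -- the binder of `∫ t in (0 : ℝ)..1` extends to the end of the goal's right-hand side
    _ ≤ 2 * M * (C + 2 * M ^ 2 * D) := by nlinarith [mul_le_mul_of_nonneg_right hM hD]
    _ = 2 * M * ∫ t in (0 : ℝ)..1, v t ^ 2 + 2 * M ^ 2 * D := by
        rw [integral_add hv2 intervalIntegrable_const]
        simp [C]

theorem stmt_15 (M b : ℝ) (hM : 1 < M) (hb : b ∈ Icc 1 M)
    (v : ℝ → ℝ) (U : Set ℝ) (hU : IsOpen U) (hIccU : Icc 0 b ⊆ U)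
    (hv : ContDiffOn ℝ 1 v U) :
    ∀ y ∈ Icc 0 b,
      ∫ t in (0 : ℝ)..y, (v t) ^ 2 ≤
        2 * M * ∫ t in (0 : ℝ)..1, (v t) ^ 2 + 2 * M ^ 2 * ∫ t in (0 : ℝ)..b, (deriv v t) ^ 2 :=
  stmt_15_general M b hb v U hU hIccU hv
end
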